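/- The supremum over positive reals b₁, b₂, c of the quantity 1 + log c − c − log((b₁+b₂)²/(2·b₁·b₂)) − 2·b₂·c/(b₁+b₂) equals −log(√3 + 2), and it is attained exactly when c = 1/√3 and b₂/b₁ = 1/√3. Consequently, the maximum over b₁, b₂, c > 0 of γ₀(b₁,b₂,c) := 1 + e^{-1} − log((b₁+b₂)²/(2b₁b₂)) − (log(1/(e·c)) + c) − 2b₂c/(b₁+b₂) equals γ₀ = 1 + e^{-1} − log(√3 + 2). -/

import Mathlib

/-- `φ(b₁,b₂,c) = 1 + log c − c − log((b₁+b₂)²/(2b₁b₂)) − 2b₂c/(b₁+b₂)`. -/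
noncomputable def phiFun (b₁ b₂ c : ℝ) : ℝ :=
  1 + Real.log c - c - Real.log ((b₁ + b₂) ^ 2 / (2 * b₁ * b₂)) - 2 * b₂ * c / (b₁ + b₂)

/-- `γ₀(b₁,b₂,c) = 1 + e⁻¹ − log((b₁+b₂)²/(2b₁b₂)) − (log(1/(ec)) + c) − 2b₂c/(b₁+b₂)`. -/
noncomputable def gamma0Fun (b₁ b₂ c : ℝ) : ℝ :=
  1 + (Real.exp 1)⁻¹ - Real.log ((b₁ + b₂) ^ 2 / (2 * b₁ * b₂))
    - (Real.log (1 / (Real.exp 1 * c)) + c) - 2 * b₂ * c / (b₁ + b₂)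

lemma key (b₁ b₂ c : ℝ) (hb₁ : 0 < b₁) (hb₂ : 0 < b₂) (hc : 0 < c) :
    phiFun b₁ b₂ c ≤ -Real.log (Real.sqrt 3 + 2) ∧
    (phiFun b₁ b₂ c = -Real.log (Real.sqrt 3 + 2) ↔
      c = 1 / Real.sqrt 3 ∧ b₂ / b₁ = 1 / Real.sqrt 3) := by
  have h3 : (0:ℝ) < Real.sqrt 3 := Real.sqrt_pos.mpr (by norm_num)
  have h3sq : Real.sqrt 3 ^ 2 = 3 := Real.sq_sqrt (by norm_num)
  have hs : (0:ℝ) < b₁ + b₂ := by linarith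
  have hd : (0:ℝ) < (b₁ + b₂) + 2 * b₂ := by linarith
  set x := ((b₁ + b₂) + 2 * b₂) * c / (b₁ + b₂) with hx_def
  set y := 2 * b₁ * b₂ * (Real.sqrt 3 + 2) / ((b₁ + b₂) * ((b₁ + b₂) + 2 * b₂)) with hy_def
  have hx : 0 < x := by positivity
  have hy : 0 < y := by positivity
  have l1 : Real.log ((b₁ + b₂) ^ 2 / (2 * b₁ * b₂))
      = 2 * Real.log (b₁ + b₂) - (Real.log 2 + Real.log b₁ + Real.log b₂) := by
    rw [Real.log_div (by positivity) (by positivity), Real.log_pow,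
      Real.log_mul (by positivity) hb₂.ne', Real.log_mul (by norm_num) hb₁.ne']
    push_cast; ring
  have l2 : Real.log x = Real.log ((b₁ + b₂) + 2 * b₂) + Real.log c - Real.log (b₁ + b₂) := by
    rw [hx_def, Real.log_div (by positivity) hs.ne', Real.log_mul hd.ne' hc.ne']
  have l3 : Real.log y = Real.log 2 + Real.log b₁ + Real.log b₂ + Real.log (Real.sqrt 3 + 2)
      - (Real.log (b₁ + b₂) + Real.log ((b₁ + b₂) + 2 * b₂)) := by
    rw [hy_def, Real.log_div (by positivity) (by positivity),
      Real.log_mul (by positivity) (by positivity),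
      Real.log_mul (by positivity) hb₂.ne',
      Real.log_mul (by norm_num) hb₁.ne',
      Real.log_mul hs.ne' hd.ne']
  have hEq : phiFun b₁ b₂ c + Real.log (Real.sqrt 3 + 2)
      = (1 + Real.log x - x) + Real.log y := by
    unfold phiFun
    rw [l1, l2, l3, hx_def]
    field_simp
    ring
  have hA : Real.log x ≤ x - 1 := Real.log_le_sub_one_of_pos hx
  have hB : y ≤ 1 := by
    rw [hy_def, div_le_one (by positivity)]
    have h3b : Real.sqrt 3 ^ 2 * b₂ ^ 2 = 3 * b₂ ^ 2 := by rw [h3sq]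
    nlinarith [sq_nonneg (b₁ - Real.sqrt 3 * b₂), h3b]
  have hBlog : Real.log y ≤ 0 := Real.log_nonpos hy.le hB
  refine ⟨by linarith, ?_, ?_⟩
  · intro heq
    have hsum : (1 + Real.log x - x) + Real.log y = 0 := by
      rw [← hEq, heq]; ring
    have hx1 : x = 1 := by
      by_contra hne
      have := Real.log_lt_sub_one_of_pos hx hne
      linarith
    have hylog : Real.log y = 0 := by
      rw [hx1] at hsum; simp at hsum; linarith [hsum]
    have hy1 : y = 1 := by
      rcases Real.log_eq_zero.mp hylog with h | h | h
      · linarith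
      · exact h
      · linarith
    have h' : 2 * b₁ * b₂ * (Real.sqrt 3 + 2) = (b₁ + b₂) * ((b₁ + b₂) + 2 * b₂) := by
      rw [hy_def, div_eq_one_iff_eq (by positivity)] at hy1
      exact hy1
    have hz : (b₁ - Real.sqrt 3 * b₂) ^ 2 = 0 := by
      linear_combination -h' + b₂ ^ 2 * h3sq
    have hb : b₁ = Real.sqrt 3 * b₂ := by
      have := pow_eq_zero_iff (n := 2) (by norm_num) |>.mp hz
      linarith
    have hcx : ((b₁ + b₂) + 2 * b₂) * c = b₁ + b₂ := by
      rw [hx_def, div_eq_one_iff_eq hs.ne'] at hx1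
      exact hx1
    constructor
    · rw [hb] at hcx
      rw [eq_div_iff h3.ne']
      have h33 : Real.sqrt 3 + 3 ≠ 0 := by positivity
      nlinarith [hcx, h3sq, hb₂]
    · rw [hb]
      rw [div_eq_div_iff (by positivity) h3.ne']
      ring
  · rintro ⟨hceq, hbeq⟩
    rw [div_eq_div_iff hb₁.ne' h3.ne'] at hbeq
    have hb : b₁ = Real.sqrt 3 * b₂ := by linarith
    have hx1 : x = 1 := by
      rw [hx_def, div_eq_one_iff_eq hs.ne', hb, hceq]
      field_simp
      linear_combination (-1) * h3sq
    have hy1 : y = 1 := by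
      rw [hy_def, div_eq_one_iff_eq (by positivity), hb]
      linear_combination b₂ ^ 2 * h3sq
    have : phiFun b₁ b₂ c + Real.log (Real.sqrt 3 + 2) = 0 := by
      rw [hEq, hx1, hy1]; simp
    linarith

lemma gamma_eq (b₁ b₂ c : ℝ) (hc : 0 < c) :
    gamma0Fun b₁ b₂ c = phiFun b₁ b₂ c + (Real.exp 1)⁻¹ + 1 := by
  unfold gamma0Fun phiFun
  rw [one_div, Real.log_inv, Real.log_mul (Real.exp_pos 1).ne' hc.ne', Real.log_exp]
  ring

/-- The supremum of `φ` over positive `b₁, b₂, c` is `−log(√3 + 2)`, attained exactly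
when `c = 1/√3` and `b₂/b₁ = 1/√3`; consequently the maximum of `γ₀(b₁,b₂,c)` over
positive `b₁, b₂, c` equals `γ₀ = 1 + e⁻¹ − log(√3 + 2)`. -/
theorem statement_8 :
    sSup {q : ℝ | ∃ b₁ b₂ c : ℝ, 0 < b₁ ∧ 0 < b₂ ∧ 0 < c ∧ q = phiFun b₁ b₂ c}
        = -Real.log (Real.sqrt 3 + 2) ∧
    (∀ b₁ b₂ c : ℝ, 0 < b₁ → 0 < b₂ → 0 < c →
      phiFun b₁ b₂ c ≤ -Real.log (Real.sqrt 3 + 2) ∧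
      (phiFun b₁ b₂ c = -Real.log (Real.sqrt 3 + 2) ↔
        c = 1 / Real.sqrt 3 ∧ b₂ / b₁ = 1 / Real.sqrt 3)) ∧
    (∀ b₁ b₂ c : ℝ, 0 < b₁ → 0 < b₂ → 0 < c →
      gamma0Fun b₁ b₂ c ≤ 1 + (Real.exp 1)⁻¹ - Real.log (Real.sqrt 3 + 2)) ∧
    (∃ b₁ b₂ c : ℝ, 0 < b₁ ∧ 0 < b₂ ∧ 0 < c ∧
      gamma0Fun b₁ b₂ c = 1 + (Real.exp 1)⁻¹ - Real.log (Real.sqrt 3 + 2)) := by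
  have h3 : (0:ℝ) < Real.sqrt 3 := Real.sqrt_pos.mpr (by norm_num)
  have hwit : phiFun (Real.sqrt 3) 1 (1 / Real.sqrt 3) = -Real.log (Real.sqrt 3 + 2) := by
    refine (key (Real.sqrt 3) 1 (1 / Real.sqrt 3) h3 one_pos (by positivity)).2.mpr ⟨rfl, ?_⟩
    rfl
  refine ⟨?_, fun b₁ b₂ c h1 h2 hc => key b₁ b₂ c h1 h2 hc, ?_, ?_⟩
  · have hbdd : -Real.log (Real.sqrt 3 + 2) ∈
        upperBounds {q : ℝ | ∃ b₁ b₂ c : ℝ, 0 < b₁ ∧ 0 < b₂ ∧ 0 < c ∧ q = phiFun b₁ b₂ c} := by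
      rintro q ⟨b₁, b₂, c, h1, h2, hc, rfl⟩
      exact (key b₁ b₂ c h1 h2 hc).1
    have hmem : -Real.log (Real.sqrt 3 + 2) ∈
        {q : ℝ | ∃ b₁ b₂ c : ℝ, 0 < b₁ ∧ 0 < b₂ ∧ 0 < c ∧ q = phiFun b₁ b₂ c} :=
      ⟨Real.sqrt 3, 1, 1 / Real.sqrt 3, h3, one_pos, by positivity, hwit.symm⟩
    exact le_antisymm (csSup_le ⟨_, hmem⟩ hbdd) (le_csSup ⟨_, hbdd⟩ hmem)
  · intro b₁ b₂ c h1 h2 hc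
    rw [gamma_eq b₁ b₂ c hc]
    have := (key b₁ b₂ c h1 h2 hc).1
    linarith
  · refine ⟨Real.sqrt 3, 1, 1 / Real.sqrt 3, h3, one_pos, by positivity, ?_⟩
    rw [gamma_eq _ _ _ (by positivity), hwit]
    ring
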